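/- Let N ≥ 2. The vector Ψ = e_0 ⊗ e_1^{⊗(N−1)} − e_1 ⊗ e_0^{⊗(N−1)} ∈ (ℂ²)^{⊗N} is genuinely multiparty entangled: Ψ ≠ 0 and for every nonempty proper subset S ⊂ {1,…,N} there exist no vectors φ ∈ ⨂_{i∈S} ℂ² and χ ∈ ⨂_{i∉S} ℂ² with Ψ = φ ⊗ χ under the canonical factor-reordering isomorphism. -/

import Mathlib

/-! The amplitudes of a product vector `φ ⊗ χ` satisfy the exchange identity
`v a * v b = v (a|_S b|_Sᶜ) * v (b|_S a|_Sᶜ)`, both sides being `φ a χ b · φ b χ a` rearranged.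
For `Ψ = |a⟩ - |b⟩` with `a`, `b` differing at every party the left side is `-1`, while the mixed
configurations are neither `a` nor `b` once `S` and `Sᶜ` are nonempty, so the right side is `0`. -/

noncomputable section

/-- The `N`-qudit Hilbert space `(ℂ^d)^{⊗N}`, realized as the Euclidean space whose
coordinates are indexed by tuples of local indices. -/
abbrev QSpace (N d : ℕ) := EuclideanSpace ℂ (Fin N → Fin d)

/-- `v` is biproduct: for some bipartition `S|Sᶜ` of the parties, `v = φ ⊗ χ` with
`φ` a vector on the parties in `S` and `χ` a vector on the parties in `Sᶜ`
(under the canonical factor-reordering isomorphism). -/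
def Biproduct {N d : ℕ} (v : QSpace N d) : Prop :=
  ∃ S : Set (Fin N), S.Nonempty ∧ S ≠ Set.univ ∧
    ∃ (φ : ((i : S) → Fin d) → ℂ) (χ : ((i : ↥Sᶜ) → Fin d) → ℂ),
      ∀ f : Fin N → Fin d, v f = φ (fun i => f i) * χ (fun i => f i)

/-- A vector is genuinely multiparty entangled if it is nonzero and not biproduct. -/
def GME {N d : ℕ} (v : QSpace N d) : Prop :=
  v ≠ 0 ∧ ¬ Biproduct v

/-- A genuinely entangled subspace: all its nonzero vectors are GME. -/
def IsGES {N d : ℕ} (G : Submodule ℂ (QSpace N d)) : Prop :=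
  ∀ v ∈ G, v ≠ 0 → GME v

/-- The standard basis vector of `(ℂ²)^{⊗N}` with local indices given by `x`. -/
def bvec {N : ℕ} (x : Fin N → Fin 2) : QSpace N 2 :=
  WithLp.toLp 2 (fun f => if f = x then 1 else 0)

theorem mul_eq_mul_piecewise_of_eq_mul {ι α R : Type*} [CommMonoid R] (S : Set ι)
    [DecidablePred (· ∈ S)] (v : (ι → α) → R) (φ : (S → α) → R) (χ : (↥Sᶜ → α) → R)
    (hv : ∀ f, v f = φ (fun i => f i) * χ (fun i => f i)) (a b : ι → α) :
    v a * v b = v (S.piecewise a b) * v (S.piecewise b a) := by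
  have restrict_S : ∀ f g : ι → α, (fun i : S => S.piecewise f g i) = fun i : S => f i :=
    fun f g => funext fun i => S.piecewise_eq_of_mem f g i.2
  have restrict_compl : ∀ f g : ι → α, (fun i : ↥Sᶜ => S.piecewise f g i) = fun i : ↥Sᶜ => g i :=
    fun f g => funext fun i => S.piecewise_eq_of_notMem f g i.2
  simp only [hv, restrict_S, restrict_compl]
  ac_rfl

theorem Set.piecewise_ne_right {ι α : Type*} {S : Set ι} [DecidablePred (· ∈ S)]
    {a b : ι → α} {i : ι} (hi : i ∈ S) (hab : a i ≠ b i) : S.piecewise a b ≠ b :=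
  fun h => hab <| by rw [← congrFun h i, S.piecewise_eq_of_mem a b hi]

theorem Set.piecewise_ne_left {ι α : Type*} {S : Set ι} [DecidablePred (· ∈ S)]
    {a b : ι → α} {j : ι} (hj : j ∉ S) (hab : a j ≠ b j) : S.piecewise a b ≠ a :=
  fun h => hab <| by rw [← congrFun h j, S.piecewise_eq_of_notMem a b hj]

theorem bvec_sub_bvec_apply {N : ℕ} (a b f : Fin N → Fin 2) :
    (bvec a - bvec b) f = (if f = a then (1 : ℂ) else 0) - if f = b then 1 else 0 :=
  rfl

theorem bvec_sub_bvec_ne_zero {N : ℕ} {a b : Fin N → Fin 2} (hab : a ≠ b) :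
    bvec a - bvec b ≠ 0 := fun h => by
  have h_a := congrArg (fun v : QSpace N 2 => v a) h
  simp only [bvec_sub_bvec_apply, hab] at h_a
  norm_num at h_a

theorem bvec_sub_bvec_ne_mul {N : ℕ} {a b : Fin N → Fin 2} (hab : ∀ i, a i ≠ b i)
    {S : Set (Fin N)} (hS : S.Nonempty) (hSU : S ≠ Set.univ)
    (φ : (S → Fin 2) → ℂ) (χ : (↥Sᶜ → Fin 2) → ℂ) :
    ¬ ∀ f, (bvec a - bvec b) f = φ (fun i => f i) * χ (fun i => f i) := by
  classical
  intro hv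
  obtain ⟨i, hi⟩ := hS
  obtain ⟨j, hj⟩ := (Set.ne_univ_iff_exists_notMem S).mp hSU
  have hab' : a ≠ b := fun h => hab i (congrFun h i)
  have exchange := mul_eq_mul_piecewise_of_eq_mul S _ φ χ hv a b
  simp only [bvec_sub_bvec_apply, hab', hab'.symm, Set.piecewise_ne_left hj (hab j),
    Set.piecewise_ne_right hi (hab i), Set.piecewise_ne_left hj (hab j).symm,
    Set.piecewise_ne_right hi (hab i).symm] at exchange
  norm_num at exchange

/-- For `N = n + 2 ≥ 2`, the vector
`Ψ = e₀ ⊗ e₁^{⊗(N-1)} − e₁ ⊗ e₀^{⊗(N-1)} ∈ (ℂ²)^{⊗N}` is genuinely multiparty entangled: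
it is nonzero and admits no product decomposition `φ ⊗ χ` across any bipartition. -/
theorem stmt18 (n : ℕ) :
    (bvec (fun i : Fin (n + 2) => if i = 0 then 0 else 1)
      - bvec (fun i : Fin (n + 2) => if i = 0 then 1 else 0)) ≠ 0 ∧
    ∀ S : Set (Fin (n + 2)), S.Nonempty → S ≠ Set.univ →
      ¬ ∃ (φ : ((i : S) → Fin 2) → ℂ) (χ : ((i : ↥Sᶜ) → Fin 2) → ℂ),
        ∀ f : Fin (n + 2) → Fin 2,
          (bvec (fun i : Fin (n + 2) => if i = 0 then 0 else 1)
            - bvec (fun i : Fin (n + 2) => if i = 0 then 1 else 0)) f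
            = φ (fun i => f i) * χ (fun i => f i) := by
  have hab : ∀ i : Fin (n + 2),
      (if i = 0 then 0 else 1 : Fin 2) ≠ if i = 0 then 1 else 0 := by
    intro i
    split_ifs <;> decide
  refine ⟨bvec_sub_bvec_ne_zero fun h => hab 0 (congrFun h 0), ?_⟩
  rintro S hS hSU ⟨φ, χ, hv⟩
  exact bvec_sub_bvec_ne_mul hab hS hSU φ χ hv
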